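/- Let A ⊆ B be fields and let T = A + XB[X]. Then every prime ideal of T different from the ideal XB[X] = {f ∈ T : f has zero constant coefficient} is a principal ideal of T. -/

import Mathlib

/-- The composite `T = A + X B[X]` for a subfield `A` of a field `B`: the subring
(an integral domain) of the polynomial ring `B[X]` consisting of all polynomials
whose constant coefficient lies in `A`. -/
def fieldComposite (B : Type*) [Field B] (A : Subfield B) :
    Subring (Polynomial B) where
  carrier := {f | f.coeff 0 ∈ A}
  zero_mem' := by simpa using zero_mem A
  one_mem' := by simpa using one_mem A
  add_mem' := fun hf hg => by
    simpa [Polynomial.coeff_add] using add_mem hf hg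
  neg_mem' := fun hf => by
    simpa [Polynomial.coeff_neg] using neg_mem (s := A) hf
  mul_mem' := fun hf hg => by
    simpa [Polynomial.mul_coeff_zero] using mul_mem hf hg

/-- The ideal `X B[X] = {f ∈ T : f has zero constant coefficient}` of the composite
`T = A + X B[X]`. -/
def fieldCompositeAugIdeal (B : Type*) [Field B] (A : Subfield B) :
    Ideal (fieldComposite B A) where
  carrier := {f | (f : Polynomial B).coeff 0 = 0}
  zero_mem' := by simp
  add_mem' := fun {a b} ha hb => by
    have h : ((a + b : fieldComposite B A) : Polynomial B) = (a : Polynomial B) + b := rfl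
    simp only [Set.mem_setOf_eq] at *
    rw [h, Polynomial.coeff_add, ha, hb, add_zero]
  smul_mem' := fun c x hx => by
    have h : ((c • x : fieldComposite B A) : Polynomial B)
        = (c : Polynomial B) * (x : Polynomial B) := rfl
    simp only [Set.mem_setOf_eq] at *
    rw [h, Polynomial.mul_coeff_zero, hx, mul_zero]

/-!
The constant coefficient is a surjection `T → A` with kernel `XB[X]`, so `XB[X]` is maximal; a
prime `P` containing `X` contains the square of every element of `XB[X]`, hence equals `XB[X]`.
So for `P ≠ XB[X]` we have `X ∉ P`, and then `{f ∈ B[X] | Xf ∈ P}` is an ideal of `B[X]` that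
is saturated with respect to `X` and whose trace on `T` is `P`. Its generator can be normalised
to have constant coefficient `1`, and such a generator of a `B[X]`-ideal also generates the
trace of that ideal on `T`.
-/
open Polynomial

theorem Ideal.exists_eq_span_singleton_coeff_zero_eq_one {K : Type*} [Field K]
    (I : Ideal K[X]) (hI : I ≠ ⊥) (hX : ∀ f, X * f ∈ I → f ∈ I) :
    ∃ g : K[X], g.coeff 0 = 1 ∧ I = Ideal.span {g} := by
  obtain ⟨g, rfl⟩ := (IsPrincipalIdealRing.principal I).principal
  have hg : g ≠ 0 := by rintro rfl; simp at hI
  have hg0 : g.coeff 0 ≠ 0 := by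
    intro h
    obtain ⟨g₁, rfl⟩ := X_dvd_iff.mpr h
    obtain ⟨k, hk⟩ := Ideal.mem_span_singleton.mp (hX g₁ (Ideal.mem_span_singleton_self _))
    have : X * k = 1 := by
      apply mul_left_cancel₀ (right_ne_zero_of_mul hg)
      linear_combination -hk
    exact not_isUnit_X (IsUnit.of_mul_eq_one _ this)
  refine ⟨C (g.coeff 0)⁻¹ * g, by simp [hg0], ?_⟩
  rw [Ideal.span_singleton_mul_left_unit (isUnit_C.mpr (IsUnit.mk0 _ (inv_ne_zero hg0)))]

namespace fieldComposite

variable {B : Type*} [Field B] {A : Subfield B}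

@[simp]
theorem mem_iff {f : B[X]} : f ∈ fieldComposite B A ↔ f.coeff 0 ∈ A := Iff.rfl

theorem X_mul_mem (f : B[X]) : X * f ∈ fieldComposite B A := by
  simp [zero_mem]

variable (B A) in
protected noncomputable def X : fieldComposite B A := ⟨X, by simp [zero_mem]⟩

variable (B A) in
noncomputable def constantCoeff : fieldComposite B A →+* A :=
  (Polynomial.constantCoeff.comp (fieldComposite B A).subtype).codRestrict A.toSubring
    fun f ↦ f.2

theorem ker_constantCoeff : RingHom.ker (constantCoeff B A) = fieldCompositeAugIdeal B A := by
  ext f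
  exact Subtype.ext_iff

theorem augIdeal_isMaximal : (fieldCompositeAugIdeal B A).IsMaximal := by
  rw [← ker_constantCoeff]
  exact RingHom.ker_isMaximal_of_surjective _ fun a ↦
    ⟨⟨C a, by simp⟩, Subtype.ext (coeff_C_zero (a := (a : B)))⟩

theorem X_notMem_of_ne_augIdeal {P : Ideal (fieldComposite B A)} (hP : P.IsPrime)
    (hne : P ≠ fieldCompositeAugIdeal B A) : fieldComposite.X B A ∉ P := by
  intro hXP
  refine hne (augIdeal_isMaximal.eq_of_le hP.ne_top fun f hf ↦ ?_).symm
  obtain ⟨d, hd⟩ := X_dvd_iff.mpr hf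
  have hsq : f * f = fieldComposite.X B A * ⟨_, X_mul_mem (d ^ 2)⟩ := by
    ext1
    show (f : B[X]) * (f : B[X]) = X * (X * d ^ 2)
    rw [hd]
    ring
  have hff : f * f ∈ P := hsq ▸ P.mul_mem_right _ hXP
  exact (hP.mem_or_mem hff).elim id id

def divXIdeal (P : Ideal (fieldComposite B A)) (hP : P.IsPrime)
    (hX : fieldComposite.X B A ∉ P) : Ideal B[X] where
  carrier := {f | ⟨_, X_mul_mem f⟩ ∈ P}
  zero_mem' := by
    have h : (⟨_, X_mul_mem 0⟩ : fieldComposite B A) = 0 := Subtype.ext (mul_zero _)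
    exact (h ▸ P.zero_mem : (⟨_, X_mul_mem 0⟩ : fieldComposite B A) ∈ P)
  add_mem' := fun {f g} hf hg ↦ by
    have : (⟨_, X_mul_mem (f + g)⟩ : fieldComposite B A) =
        ⟨_, X_mul_mem f⟩ + ⟨_, X_mul_mem g⟩ := Subtype.ext (mul_add _ _ _)
    exact (this ▸ P.add_mem hf hg : (⟨_, X_mul_mem (f + g)⟩ : fieldComposite B A) ∈ P)
  smul_mem' := fun c f hf ↦ by
    have h : fieldComposite.X B A * ⟨_, X_mul_mem (c * f)⟩ =
        ⟨_, X_mul_mem c⟩ * ⟨_, X_mul_mem f⟩ := by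
      ext1
      show X * (X * (c * f)) = X * c * (X * f)
      ring
    exact (hP.mem_or_mem (h ▸ P.mul_mem_left _ hf)).resolve_left hX

variable {P : Ideal (fieldComposite B A)}

theorem mem_divXIdeal (hP : P.IsPrime) (hX : fieldComposite.X B A ∉ P) {f : B[X]} :
    f ∈ divXIdeal P hP hX ↔ ⟨_, X_mul_mem f⟩ ∈ P := Iff.rfl

theorem comap_divXIdeal (hP : P.IsPrime) (hX : fieldComposite.X B A ∉ P) :
    (divXIdeal P hP hX).comap (fieldComposite B A).subtype = P := by
  ext f
  have h : (⟨_, X_mul_mem f.1⟩ : fieldComposite B A) = fieldComposite.X B A * f := rfl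
  rw [Ideal.mem_comap, Subring.coe_subtype, mem_divXIdeal, h]
  exact ⟨fun hf ↦ (hP.mem_or_mem hf).resolve_left hX, P.mul_mem_left _⟩

theorem mem_divXIdeal_of_X_mul_mem (hP : P.IsPrime) (hX : fieldComposite.X B A ∉ P) {f : B[X]}
    (hf : X * f ∈ divXIdeal P hP hX) : f ∈ divXIdeal P hP hX := by
  have h : (⟨_, X_mul_mem (X * f)⟩ : fieldComposite B A) =
      fieldComposite.X B A * ⟨_, X_mul_mem f⟩ := rfl
  exact (hP.mem_or_mem (h ▸ hf)).resolve_left hX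

theorem divXIdeal_ne_bot (hP : P.IsPrime) (hX : fieldComposite.X B A ∉ P) (hbot : P ≠ ⊥) :
    divXIdeal P hP hX ≠ ⊥ := by
  intro h
  rw [← comap_divXIdeal hP hX, h, ← RingHom.ker_eq_comap_bot,
    (RingHom.injective_iff_ker_eq_bot _).mp Subtype.val_injective] at hbot
  exact hbot rfl

theorem comap_span_singleton {g : B[X]} (hg : g.coeff 0 = 1) :
    (Ideal.span {g}).comap (fieldComposite B A).subtype =
      Ideal.span {⟨g, by simp [hg]⟩} := by
  refine le_antisymm (fun f hf ↦ ?_) ?_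
  · obtain ⟨k, hk⟩ := Ideal.mem_span_singleton.mp hf
    have hk : (f : B[X]) = g * k := hk
    have hk0 : (f : B[X]).coeff 0 = k.coeff 0 := by rw [hk, mul_coeff_zero, hg, one_mul]
    exact Ideal.mem_span_singleton.mpr ⟨⟨k, mem_iff.mpr (hk0 ▸ f.2)⟩, Subtype.ext hk⟩
  · rw [Ideal.span_le, Set.singleton_subset_iff]
    exact Ideal.mem_span_singleton_self g

end fieldComposite

open fieldComposite in
/-- Let `A ⊆ B` be fields and let `T = A + X B[X]`.  Then every prime
ideal of `T` different from the ideal `X B[X] = {f ∈ T : f has zero constant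
coefficient}` is a principal ideal of `T`. -/
theorem fieldComposite_prime_ideal_isPrincipal (B : Type*) [Field B] (A : Subfield B)
    (P : Ideal (fieldComposite B A)) (hP : P.IsPrime)
    (hne : P ≠ fieldCompositeAugIdeal B A) :
    P.IsPrincipal := by
  rcases eq_or_ne P ⊥ with rfl | hbot
  · exact bot_isPrincipal
  have hX := X_notMem_of_ne_augIdeal hP hne
  obtain ⟨g, hg, hspan⟩ := (divXIdeal P hP hX).exists_eq_span_singleton_coeff_zero_eq_one
    (divXIdeal_ne_bot hP hX hbot) fun _ ↦ mem_divXIdeal_of_X_mul_mem hP hX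
  rw [← comap_divXIdeal hP hX, hspan, comap_span_singleton hg]
  exact ⟨_, rfl⟩
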